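/- arXiv:2404.19416 — 3 statements merged into one kernel-verified Lean document; each statement's English description precedes it below -/
import Mathlib

section
/- For all natural n ≥ 2 and all ε ∈ [0, π/2], (∫_0^{π/2+ε} sin^n t dt) / (∫_0^π sin^n t dt) ≥ 1 − √(π/8) · exp(−ε²(n−1)/2). -/
/-!
Write `I n = ∫₀^π sinⁿ`. The part of the integral cut off by the cap is
`∫_{π/2+ε}^π sinⁿ = ∫_ε^{π/2} cosⁿ`, and `cos s ≤ exp (-s²/2)` on `[0, π/2]` bounds it by the
Gaussian tail `∫_ε^∞ exp (-n s²/2) ≤ exp (-n ε²/2) √(π/(2n))`. On the other hand the Wallis-type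
identity `(n + 1) I n I (n + 1) = 2π` together with `I (n + 1) ≤ I n` gives `I n ≥ √(2π/(n+1))`,
and `√(π/(2n)) ≤ √(π/8) √(2π/(n+1))` once `n ≥ 2`, because `π ≥ 3`.
-/

open Real MeasureTheory Set intervalIntegral

namespace Real

theorem cos_le_exp_neg_sq_div_two {x : ℝ} (hx₀ : 0 ≤ x) (hx : x ≤ π / 2) :
    cos x ≤ exp (-(x ^ 2 / 2)) := by
  set f : ℝ → ℝ := fun y ↦ cos y * exp (y ^ 2 / 2)
  have hf : ∀ y, HasDerivAt f (exp (y ^ 2 / 2) * (y * cos y - sin y)) y := fun y ↦ by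
    refine ((hasDerivAt_cos y).mul ((hasDerivAt_pow 2 y).div_const 2).exp).congr_deriv ?_
    norm_num
    ring
  -- `f' y ≤ 0` is `y ≤ tan y`.
  have hanti : AntitoneOn f (Icc 0 (π / 2)) := by
    refine antitoneOn_of_deriv_nonpos (convex_Icc _ _) (by fun_prop)
      (fun y _ ↦ (hf y).differentiableAt.differentiableWithinAt) fun y hy ↦ ?_
    rw [interior_Icc] at hy
    have hcos : 0 < cos y := cos_pos_of_mem_Ioo ⟨by linarith [hy.1], hy.2⟩
    have htan := lt_tan hy.1 hy.2
    rw [tan_eq_sin_div_cos, lt_div_iff₀ hcos] at htan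
    rw [(hf y).deriv]
    exact mul_nonpos_of_nonneg_of_nonpos (exp_pos _).le (by linarith)
  have h := hanti ⟨le_rfl, pi_div_two_pos.le⟩ ⟨hx₀, hx⟩ hx₀
  simp only [f, cos_zero, ne_eq, OfNat.ofNat_ne_zero, not_false_eq_true, zero_pow, zero_div,
    exp_zero, mul_one] at h
  rwa [exp_neg, ← one_div, le_div_iff₀ (exp_pos _)]

end Real

theorem mul_integral_sin_pow_mul_integral_sin_pow_succ (n : ℕ) :
    (n + 1) * ((∫ x in (0)..π, sin x ^ n) * ∫ x in (0)..π, sin x ^ (n + 1)) = 2 * π := by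
  induction n with
  | zero => norm_num; ring
  | succ n ih =>
    rw [integral_sin_pow]
    simp only [sin_zero, sin_pi, ne_eq, add_eq_zero, one_ne_zero, and_false, not_false_eq_true,
      zero_pow, zero_mul, sub_self, zero_div, zero_add]
    push_cast at ih ⊢
    field_simp
    linear_combination (n + 2) * ih

theorem sqrt_two_pi_div_le_integral_sin_pow (n : ℕ) :
    √(2 * π / (n + 1)) ≤ ∫ x in (0)..π, sin x ^ n := by
  have hI := integral_sin_pow_pos n
  rw [sqrt_le_left hI.le, div_le_iff₀ (by positivity),
    ← mul_integral_sin_pow_mul_integral_sin_pow_succ n]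
  have := mul_le_mul_of_nonneg_left (integral_sin_pow_succ_le n) hI.le
  nlinarith

theorem integral_sin_pow_eq_integral_cos_pow (n : ℕ) (a : ℝ) :
    ∫ t in (π / 2 + a)..π, sin t ^ n = ∫ s in a..π / 2, cos s ^ n := by
  simp only [← sin_add_pi_div_two, integral_comp_add_right (fun t ↦ sin t ^ n)]
  congr 1 <;> ring

theorem integral_exp_neg_mul_sq_le {c a b : ℝ} (hc : 0 < c) (ha : 0 ≤ a) (hab : a ≤ b) :
    ∫ s in a..b, exp (-c * s ^ 2) ≤ exp (-c * a ^ 2) * (√(π / c) / 2) := by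
  -- On `[a, b]` we have `s² ≥ a² + (s - a)²`.
  calc ∫ s in a..b, exp (-c * s ^ 2)
      ≤ ∫ s in a..b, exp (-c * a ^ 2) * exp (-c * (s - a) ^ 2) := by
        refine integral_mono_on hab ((by fun_prop : Continuous _).intervalIntegrable _ _)
          ((by fun_prop : Continuous _).intervalIntegrable _ _) fun s hs ↦ ?_
        rw [← exp_add, exp_le_exp]
        nlinarith [mul_nonneg (mul_nonneg hc.le ha) (sub_nonneg.2 hs.1)]
    _ = exp (-c * a ^ 2) * ∫ u in (0)..(b - a), exp (-c * u ^ 2) := by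
        rw [intervalIntegral.integral_const_mul,
          integral_comp_sub_right (fun u ↦ exp (-c * u ^ 2)), sub_self]
    _ ≤ exp (-c * a ^ 2) * (√(π / c) / 2) := by
        gcongr
        rw [← integral_gaussian_Ioi c, integral_of_le (by linarith)]
        exact setIntegral_mono_set (integrable_exp_neg_mul_sq hc).integrableOn
          (.of_forall fun _ ↦ (exp_pos _).le) Ioc_subset_Ioi_self.eventuallyLE

theorem integral_cos_pow_le {n : ℕ} (hn : 0 < n) {a : ℝ} (ha₀ : 0 ≤ a) (ha : a ≤ π / 2) :
    ∫ s in a..π / 2, cos s ^ n ≤ exp (-(n * a ^ 2 / 2)) * √(π / (2 * n)) := by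
  have hn' : (0 : ℝ) < n / 2 := by positivity
  calc ∫ s in a..π / 2, cos s ^ n
      ≤ ∫ s in a..π / 2, exp (-(n / 2) * s ^ 2) := by
        refine integral_mono_on ha ((by fun_prop : Continuous _).intervalIntegrable _ _)
          ((by fun_prop : Continuous _).intervalIntegrable _ _) fun s hs ↦ ?_
        calc cos s ^ n ≤ exp (-(s ^ 2 / 2)) ^ n := by
              gcongr
              · exact cos_nonneg_of_mem_Icc ⟨by linarith [pi_pos, hs.1], hs.2⟩
              · exact cos_le_exp_neg_sq_div_two (ha₀.trans hs.1) hs.2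
          _ = exp (-(n / 2) * s ^ 2) := by rw [← exp_nat_mul]; ring_nf
    _ ≤ exp (-(n / 2) * a ^ 2) * (√(π / (n / 2)) / 2) := integral_exp_neg_mul_sq_le hn' ha₀ ha
    _ = exp (-(n * a ^ 2 / 2)) * √(π / (2 * n)) := by
        congr 1
        · ring_nf
        · rw [show π / (2 * n) = π / (n / 2) / 2 ^ 2 by ring, sqrt_div' _ (sq_nonneg 2),
            sqrt_sq zero_le_two]

theorem sqrt_pi_div_two_mul_le_sqrt_pi_div_eight_mul {x : ℝ} (hx : 2 ≤ x) :
    √(π / (2 * x)) ≤ √(π / 8) * √(2 * π / (x + 1)) := by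
  rw [← sqrt_mul (by positivity)]
  refine sqrt_le_sqrt ?_
  rw [div_le_iff₀ (by positivity)]
  have : π / 8 * (2 * π / (x + 1)) * (2 * x) = π * (π * x / (2 * (x + 1))) := by
    field_simp
    norm_num
  rw [this, le_mul_iff_one_le_right pi_pos, one_le_div (by positivity)]
  nlinarith [pi_gt_three]

/-- Quantitative cap-volume estimate behind Lévy's concentration of measure on `S^n(1)`:
for `n ≥ 2` and `ε ∈ [0, π/2]`,
`(∫_0^{π/2+ε} sin^n t dt) / (∫_0^π sin^n t dt) ≥ 1 - √(π/8) e^{-ε²(n-1)/2}`. -/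
theorem sin_power_cap_ratio_lower_bound (n : ℕ) (hn : 2 ≤ n) (ε : ℝ)
    (hε : ε ∈ Set.Icc (0 : ℝ) (π / 2)) :
    (∫ t in (0 : ℝ)..(π / 2 + ε), Real.sin t ^ n) / (∫ t in (0 : ℝ)..π, Real.sin t ^ n)
      ≥ 1 - Real.sqrt (π / 8) * Real.exp (-ε ^ 2 * ((n : ℝ) - 1) / 2) := by
  obtain ⟨hε₀, hε⟩ := hε
  have hn₂ : (2 : ℝ) ≤ n := by exact_mod_cast hn
  set I := ∫ t in (0 : ℝ)..π, sin t ^ n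
  set E := exp (-ε ^ 2 * ((n : ℝ) - 1) / 2)
  have hI : 0 < I := integral_sin_pow_pos n
  have htail : ∫ t in (π / 2 + ε)..π, sin t ^ n ≤ √(π / 8) * E * I := calc
    _ = ∫ s in ε..π / 2, cos s ^ n := integral_sin_pow_eq_integral_cos_pow n ε
    _ ≤ exp (-(n * ε ^ 2 / 2)) * √(π / (2 * n)) := integral_cos_pow_le (by omega) hε₀ hε
    _ ≤ E * (√(π / 8) * √(2 * π / (n + 1))) := by
      gcongr
      · exact exp_le_exp.2 (by nlinarith)
      · exact sqrt_pi_div_two_mul_le_sqrt_pi_div_eight_mul hn₂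
    _ ≤ E * (√(π / 8) * I) := by gcongr; exact sqrt_two_pi_div_le_integral_sin_pow n
    _ = √(π / 8) * E * I := by ring
  have hsplit : I - ∫ t in (0)..(π / 2 + ε), sin t ^ n = ∫ t in (π / 2 + ε)..π, sin t ^ n :=
    integral_interval_sub_left ((continuous_sin.pow n).intervalIntegrable _ _)
      ((continuous_sin.pow n).intervalIntegrable _ _)
  rw [ge_iff_le, le_div_iff₀ hI]
  linarith
end

section
/- Let Ω_ε = {x ∈ S^n(1) : −sin ε < x_{n+1} < sin ε} be the ε-strip around the equator {x_{n+1}=0} of the unit n-sphere, with ε ∈ [0, π/2]. Then vol(Ω_ε)/vol(S^n(1)) ≥ 1 − √(π/2)·exp(−ε²(n−1)/2). -/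
open Real MeasureTheory

lemma aux_cos_le_exp {x : ℝ} (hx0 : 0 ≤ x) (hx : x ≤ π / 2) :
    Real.cos x ≤ Real.exp (-(x ^ 2 / 2)) := by
  have key : AntitoneOn (fun s : ℝ => Real.cos s * Real.exp (s ^ 2 / 2)) (Set.Icc 0 (π / 2)) := by
    have hderiv : ∀ s : ℝ, HasDerivAt (fun s : ℝ => Real.cos s * Real.exp (s ^ 2 / 2))
        (-Real.sin s * Real.exp (s ^ 2 / 2) + Real.cos s * (Real.exp (s ^ 2 / 2) * s)) s := by
      intro s
      have h1 : HasDerivAt (fun s : ℝ => s ^ 2 / 2) s s := by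
        have := (hasDerivAt_pow 2 s).div_const 2
        simpa using this
      exact (Real.hasDerivAt_cos s).mul h1.exp
    apply antitoneOn_of_deriv_nonpos (convex_Icc _ _)
    · exact (Real.continuous_cos.mul (Real.continuous_exp.comp (by continuity))).continuousOn
    · intro s _
      exact (hderiv s).differentiableAt.differentiableWithinAt
    · intro s hs
      rw [interior_Icc] at hs
      rw [(hderiv s).deriv]
      have hs0 : 0 < s := hs.1
      have hs2 : s < π / 2 := hs.2
      have hcos : 0 < Real.cos s := Real.cos_pos_of_mem_Ioo ⟨by linarith [Real.pi_pos], hs2⟩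
      have htan : s < Real.tan s := Real.lt_tan hs0 hs2
      rw [Real.tan_eq_sin_div_cos] at htan
      have : s * Real.cos s < Real.sin s := by
        rwa [lt_div_iff₀ hcos] at htan
      have he : 0 < Real.exp (s ^ 2 / 2) := Real.exp_pos _
      nlinarith
  have h0 : (0 : ℝ) ∈ Set.Icc (0 : ℝ) (π / 2) := ⟨le_refl _, by positivity⟩
  have hx' : x ∈ Set.Icc (0 : ℝ) (π / 2) := ⟨hx0, hx⟩
  have := key h0 hx' hx0
  simp only [Real.cos_zero, ne_eq, OfNat.ofNat_ne_zero, not_false_eq_true, zero_pow,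
    zero_div, Real.exp_zero, mul_one] at this
  have he : 0 < Real.exp (x ^ 2 / 2) := Real.exp_pos _
  calc Real.cos x = Real.cos x * Real.exp (x ^ 2 / 2) * Real.exp (-(x ^ 2 / 2)) := by
        rw [mul_assoc, ← Real.exp_add]; simp
    _ ≤ 1 * Real.exp (-(x ^ 2 / 2)) :=
        mul_le_mul_of_nonneg_right this (Real.exp_pos _).le
    _ = Real.exp (-(x ^ 2 / 2)) := one_mul _

lemma aux_sin_pow_mul (n : ℕ) :
    (∫ x in (0:ℝ)..π, Real.sin x ^ n) * (∫ x in (0:ℝ)..π, Real.sin x ^ (n + 1))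
      = 2 * π / (n + 1) := by
  induction n with
  | zero => simp [integral_sin]; ring
  | succ m ih =>
    have hrec := integral_sin_pow (a := (0:ℝ)) (b := π) m
    have hpos := integral_sin_pow_pos (m + 1)
    simp only [Real.sin_zero, Real.sin_pi, Real.cos_zero, Real.cos_pi, zero_pow, mul_zero,
      mul_one, zero_mul, sub_zero, zero_sub, zero_div, zero_add] at hrec
    simp only [zero_pow (Nat.succ_ne_zero m)] at hrec
    rw [show m + 1 + 1 = m + 2 from rfl, hrec]
    push_cast
    have h1 : ((m:ℝ)+1) ≠ 0 := by positivity
    have h2 : ((m:ℝ)+2) ≠ 0 := by positivity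
    rw [eq_div_iff h1] at ih
    rw [eq_div_iff (show ((m:ℝ)+1+1) ≠ 0 by positivity)]
    field_simp
    linear_combination ((m:ℝ)+2) * ih

lemma aux_sin_pow_lower (n : ℕ) :
    Real.sqrt (2 * π / (n + 1)) ≤ ∫ x in (0:ℝ)..π, Real.sin x ^ n := by
  have h1 : (∫ x in (0:ℝ)..π, Real.sin x ^ (n+1)) ≤ ∫ x in (0:ℝ)..π, Real.sin x ^ n :=
    integral_sin_pow_succ_le n
  have hpos : 0 < ∫ x in (0:ℝ)..π, Real.sin x ^ n := integral_sin_pow_pos n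
  have hsq : 2 * π / (n + 1) ≤ (∫ x in (0:ℝ)..π, Real.sin x ^ n) ^ 2 := by
    rw [← aux_sin_pow_mul n]; nlinarith
  calc Real.sqrt (2 * π / (n + 1)) ≤ Real.sqrt ((∫ x in (0:ℝ)..π, Real.sin x ^ n) ^ 2) :=
        Real.sqrt_le_sqrt hsq
    _ = _ := Real.sqrt_sq hpos.le

lemma aux_tail (n : ℕ) (hn : 1 ≤ n) {ε : ℝ} (hε0 : 0 ≤ ε) (hε : ε ≤ π / 2) :
    (∫ s in ε..(π/2), Real.cos s ^ n)
      ≤ Real.exp (-((n:ℝ)/2) * ε ^ 2) * (Real.sqrt (2 * π / n) / 2) := by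
  have hb : (0:ℝ) < (n:ℝ)/2 := by positivity
  have hgauss : Integrable (fun x : ℝ => Real.exp (-((n:ℝ)/2) * x ^ 2)) :=
    integrable_exp_neg_mul_sq hb
  have step1 : (∫ s in ε..(π/2), Real.cos s ^ n)
      ≤ ∫ s in ε..(π/2), Real.exp (-((n:ℝ)/2) * ε ^ 2) * Real.exp (-((n:ℝ)/2) * (s - ε) ^ 2) := by
    apply intervalIntegral.integral_mono_on hε
    · exact ((Real.continuous_cos.pow n)).intervalIntegrable _ _
    · exact (Continuous.intervalIntegrable (by continuity) _ _)
    · intro s hs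
      have hs1 : ε ≤ s := hs.1
      have hs2 : s ≤ π / 2 := hs.2
      have hcos : Real.cos s ^ n ≤ Real.exp (-(s ^ 2 / 2)) ^ n :=
        pow_le_pow_left₀ (Real.cos_nonneg_of_mem_Icc ⟨by linarith [Real.pi_pos], hs2⟩)
          (aux_cos_le_exp (by linarith) hs2) n
      have heq : Real.exp (-(s ^ 2 / 2)) ^ n = Real.exp (-((n:ℝ)/2) * s ^ 2) := by
        rw [← Real.exp_nat_mul]; ring_nf
      calc Real.cos s ^ n ≤ Real.exp (-((n:ℝ)/2) * s ^ 2) := by rw [← heq]; exact hcos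
        _ ≤ _ := by
          rw [← Real.exp_add]
          apply Real.exp_le_exp.2
          nlinarith [mul_nonneg (mul_nonneg hb.le hε0) (sub_nonneg.2 hs1)]
  have step2 : (∫ s in ε..(π/2), Real.exp (-((n:ℝ)/2) * ε ^ 2) * Real.exp (-((n:ℝ)/2) * (s - ε) ^ 2))
      = Real.exp (-((n:ℝ)/2) * ε ^ 2) * ∫ v in (0:ℝ)..(π/2 - ε), Real.exp (-((n:ℝ)/2) * v ^ 2) := by
    rw [intervalIntegral.integral_const_mul]
    congr 1
    have := intervalIntegral.integral_comp_sub_right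
      (fun v => Real.exp (-((n:ℝ)/2) * v ^ 2)) ε (a := ε) (b := π/2)
    simpa [sub_self] using this
  have step3 : (∫ v in (0:ℝ)..(π/2 - ε), Real.exp (-((n:ℝ)/2) * v ^ 2))
      ≤ Real.sqrt (2 * π / n) / 2 := by
    have hc : (0:ℝ) ≤ π/2 - ε := by linarith
    rw [intervalIntegral.integral_of_le hc]
    have hmono : (∫ v in Set.Ioc (0:ℝ) (π/2 - ε), Real.exp (-((n:ℝ)/2) * v ^ 2))
        ≤ ∫ v in Set.Ioi (0:ℝ), Real.exp (-((n:ℝ)/2) * v ^ 2) := by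
      apply setIntegral_mono_set hgauss.integrableOn
      · exact Filter.Eventually.of_forall fun x => (Real.exp_pos _).le
      · exact (Set.Ioc_subset_Ioi_self).eventuallyLE
    rw [integral_gaussian_Ioi] at hmono
    have : π / ((n:ℝ)/2) = 2 * π / n := by field_simp
    rwa [this] at hmono
  calc (∫ s in ε..(π/2), Real.cos s ^ n) ≤ _ := step1
    _ = _ := step2
    _ ≤ _ := by
      apply mul_le_mul_of_nonneg_left step3 (Real.exp_pos _).le
/-- Fat equator effect for the unit sphere `S^n(1)`: the relative volume of the `ε`-strip
around an equator, `vol(Ω_ε)/vol(S^n)= (∫_{π/2-ε}^{π/2+ε} sin^n t dt)/(∫_0^π sin^n t dt)`,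
is at least `1 - √(π/2) e^{-ε²(n-1)/2}`, for `n ≥ 2` and `ε ∈ [0, π/2]`. -/
theorem sin_power_strip_ratio_lower_bound (n : ℕ) (hn : 2 ≤ n) (ε : ℝ)
    (hε : ε ∈ Set.Icc (0 : ℝ) (π / 2)) :
    (∫ t in (π / 2 - ε)..(π / 2 + ε), Real.sin t ^ n) / (∫ t in (0 : ℝ)..π, Real.sin t ^ n)
      ≥ 1 - Real.sqrt (π / 2) * Real.exp (-ε ^ 2 * ((n : ℝ) - 1) / 2) := by
  obtain ⟨hε0, hε2⟩ := hε
  have hπ : (0:ℝ) < π := Real.pi_pos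
  set I : ℝ := ∫ t in (0:ℝ)..π, Real.sin t ^ n with hI
  set T : ℝ := ∫ s in ε..(π/2), Real.cos s ^ n with hT
  set C : ℝ := Real.sqrt (π / 2) * Real.exp (-ε ^ 2 * ((n : ℝ) - 1) / 2) with hC
  have hIpos : 0 < I := integral_sin_pow_pos n
  have hCpos : 0 < C := by positivity
  have hint : ∀ a b : ℝ, IntervalIntegrable (fun t => Real.sin t ^ n) volume a b :=
    fun a b => (Real.continuous_sin.pow n).intervalIntegrable a b
  -- the right tail equals T
  have htail : (∫ t in (π/2 + ε)..π, Real.sin t ^ n) = T := by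
    have h := intervalIntegral.integral_comp_add_left (a := ε) (b := π/2)
      (fun t => Real.sin t ^ n) (π/2)
    have h2 : (π/2 : ℝ) + π/2 = π := by ring
    rw [h2] at h
    rw [← h, hT]
    apply intervalIntegral.integral_congr
    intro x _
    simp [Real.sin_add]
  -- the left tail equals T
  have hleft : (∫ t in (0:ℝ)..(π/2 - ε), Real.sin t ^ n) = T := by
    have h := intervalIntegral.integral_comp_sub_left (a := (0:ℝ)) (b := π/2 - ε)
      (fun t => Real.sin t ^ n) π
    have h2 : π - (π/2 - ε) = π/2 + ε := by ring
    rw [h2, sub_zero] at h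
    simp only [Real.sin_pi_sub] at h
    rw [h, htail]
  -- decomposition
  have hsplit : (∫ t in (π / 2 - ε)..(π / 2 + ε), Real.sin t ^ n) = I - 2 * T := by
    have h1 : (∫ t in (0:ℝ)..(π/2 - ε), Real.sin t ^ n)
        + (∫ t in (π/2 - ε)..(π/2 + ε), Real.sin t ^ n)
        + (∫ t in (π/2 + ε)..π, Real.sin t ^ n) = I := by
      rw [intervalIntegral.integral_add_adjacent_intervals (hint _ _) (hint _ _),
        intervalIntegral.integral_add_adjacent_intervals (hint _ _) (hint _ _)]
    rw [hleft, htail] at h1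
    linarith
  -- tail bound
  have h2T : 2 * T ≤ C * I := by
    have hb1 : 2 * T ≤ Real.exp (-((n:ℝ)/2) * ε ^ 2) * Real.sqrt (2 * π / n) := by
      have := aux_tail n (by omega) hε0 hε2
      rw [← hT] at this
      linarith
    have hb2 : Real.exp (-((n:ℝ)/2) * ε ^ 2) * Real.sqrt (2 * π / n)
        ≤ C * Real.sqrt (2 * π / (n + 1)) := by
      have he : Real.exp (-((n:ℝ)/2) * ε ^ 2) ≤ Real.exp (-ε ^ 2 * ((n : ℝ) - 1) / 2) := by
        apply Real.exp_le_exp.2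
        nlinarith [sq_nonneg ε]
      have hs : Real.sqrt (2 * π / n) ≤ Real.sqrt (π / 2) * Real.sqrt (2 * π / (n + 1)) := by
        rw [← Real.sqrt_mul (by positivity)]
        apply Real.sqrt_le_sqrt
        have heq : π / 2 * (2 * π / ((n:ℝ) + 1)) = π ^ 2 / ((n:ℝ) + 1) := by ring
        rw [heq, div_le_div_iff₀ (by positivity) (by positivity)]
        have hπ3 : (3:ℝ) ≤ π := by linarith [Real.pi_gt_three]
        have hn2 : (2:ℝ) ≤ (n:ℝ) := by exact_mod_cast hn
        have hn0 : (0:ℝ) < (n:ℝ) := by linarith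
        nlinarith [mul_le_mul_of_nonneg_right hπ3 (mul_pos hπ hn0).le,
          mul_le_mul_of_nonneg_left hn2 hπ.le]
      calc Real.exp (-((n:ℝ)/2) * ε ^ 2) * Real.sqrt (2 * π / n)
          ≤ Real.exp (-ε ^ 2 * ((n : ℝ) - 1) / 2) * (Real.sqrt (π / 2) * Real.sqrt (2 * π / (n + 1))) :=
            mul_le_mul he hs (Real.sqrt_nonneg _) (Real.exp_pos _).le
        _ = C * Real.sqrt (2 * π / (n + 1)) := by rw [hC]; ring
    have hb3 : C * Real.sqrt (2 * π / (n + 1)) ≤ C * I :=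
      mul_le_mul_of_nonneg_left (aux_sin_pow_lower n) hCpos.le
    linarith
  rw [hsplit, ge_iff_le]
  have : 2 * T / I ≤ C := (div_le_iff₀ hIpos).2 h2T
  calc 1 - C ≤ 1 - 2 * T / I := by linarith
    _ = (I - 2 * T) / I := by field_simp
end

section
/- Define F(s) = (1/vol(S^m)) ∫_{S^m} exp(s·cos²(d_p)) dvol for geodesic distance d_p on the unit m-sphere. Then F(0) = 1 and F satisfies F'(s)/F(s) ≤ 1/(m+1−2s) for 0 ≤ s < (m+1)/2; consequently F(t) ≤ √((m+1)/(m+1−2t)) for all 0 < t < (m+1)/2. -/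
/-!
Write `k = m - 1` and `M_n(s) = ∫₀^π cos^{2n} u e^{s cos² u} sin^k u du`, so that `F = M₀ / M₀(0)`
and `F' = M₁ / M₀(0)`. Integrating by parts against `sin^k u du` (the polar form of
`Δ cos d_p = -m cos d_p`) gives `(2n+1) M_n = (2n+k+2-2s) M_{n+1} + 2s M_{n+2}`; for `n = 0` and
`s ≥ 0` this yields `(m+1-2s) F' ≤ F`. Then `F² (m+1-2s)` is antitone on `[0, t]`, and comparing
its values at `0` and `t` gives the square-root bound.
-/

open Real MeasureTheory Set intervalIntegral

noncomputable def cosSqMoment (k n : ℕ) (s : ℝ) : ℝ :=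
  ∫ u in (0 : ℝ)..π, cos u ^ (2 * n) * exp (s * cos u ^ 2) * sin u ^ k

lemma norm_cos_pow_mul_exp_mul_sin_pow_le (k n : ℕ) {x r : ℝ} (hx : |x| ≤ r) (u : ℝ) :
    ‖cos u ^ n * exp (x * cos u ^ 2) * sin u ^ k‖ ≤ exp r := by
  have hcos : |cos u| ^ n ≤ 1 := pow_le_one₀ (abs_nonneg _) (abs_cos_le_one u)
  have hsin : |sin u| ^ k ≤ 1 := pow_le_one₀ (abs_nonneg _) (abs_sin_le_one u)
  have hexp : exp (x * cos u ^ 2) ≤ exp r := by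
    gcongr
    calc x * cos u ^ 2 ≤ |x| * 1 :=
          (le_abs_self _).trans (by rw [abs_mul, abs_sq]; gcongr; exact cos_sq_le_one u)
      _ ≤ r := by rwa [mul_one]
  simp only [norm_mul, norm_pow, Real.norm_eq_abs, abs_of_pos (exp_pos _)]
  calc |cos u| ^ n * exp (x * cos u ^ 2) * |sin u| ^ k ≤ 1 * exp r * 1 := by gcongr
    _ = exp r := by ring

lemma hasDerivAt_cosSqMoment (k n : ℕ) (s : ℝ) :
    HasDerivAt (cosSqMoment k n) (cosSqMoment k (n + 1) s) s := by
  have hcont (j : ℕ) (x : ℝ) :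
      Continuous fun u => cos u ^ (2 * j) * exp (x * cos u ^ 2) * sin u ^ k := by
    fun_prop
  have hderiv (u x : ℝ) : HasDerivAt (fun x => cos u ^ (2 * n) * exp (x * cos u ^ 2) * sin u ^ k)
      (cos u ^ (2 * (n + 1)) * exp (x * cos u ^ 2) * sin u ^ k) x :=
    ((((hasDerivAt_mul_const (cos u ^ 2)).exp).const_mul (cos u ^ (2 * n))).mul_const
      (sin u ^ k)).congr_deriv (by ring)
  refine (hasDerivAt_integral_of_dominated_loc_of_deriv_le (Metric.ball_mem_nhds s one_pos)
    (.of_forall fun x => (hcont n x).aestronglyMeasurable) ((hcont n s).intervalIntegrable 0 π)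
    (hcont (n + 1) s).aestronglyMeasurable
    (bound := fun _ => exp (|s| + 1)) ?_ intervalIntegrable_const
    (.of_forall fun u _ x _ => hderiv u x)).2
  refine .of_forall fun u _ x hx => norm_cos_pow_mul_exp_mul_sin_pow_le k _ ?_ u
  calc |x| ≤ |x - s| + |s| := by simpa using abs_add_le (x - s) s
    _ ≤ |s| + 1 := by rw [← Real.dist_eq]; linarith [Metric.mem_ball.1 hx]

lemma cosSqMoment_nonneg (k n : ℕ) (s : ℝ) : 0 ≤ cosSqMoment k n s := by
  refine integral_nonneg pi_pos.le fun u hu => ?_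
  have := sin_nonneg_of_nonneg_of_le_pi hu.1 hu.2
  rw [pow_mul]
  positivity

lemma cosSqMoment_zero_pos (k : ℕ) (s : ℝ) : 0 < cosSqMoment k 0 s := by
  refine intervalIntegral_pos_of_pos_on (Continuous.intervalIntegrable (by fun_prop) 0 π)
    (fun u hu => ?_) pi_pos
  have := sin_pos_of_pos_of_lt_pi hu.1 hu.2
  simp only [mul_zero, pow_zero, one_mul]
  positivity

-- Integrate `d/du [cos^(2n+1) u sin^(k+1) u e^{s cos² u}]` over `[0, π]`, using `sin² = 1 - cos²`.
lemma cosSqMoment_recurrence (k n : ℕ) (s : ℝ) :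
    (2 * n + 1) * cosSqMoment k n s
      = (2 * n + k + 2 - 2 * s) * cosSqMoment k (n + 1) s + 2 * s * cosSqMoment k (n + 2) s := by
  set f : ℕ → ℝ → ℝ := fun j u => cos u ^ (2 * j) * exp (s * cos u ^ 2) * sin u ^ k
  have hf : ∀ j, IntervalIntegrable (f j) volume 0 π := fun j =>
    Continuous.intervalIntegrable (by fun_prop) 0 π
  set g : ℝ → ℝ := fun u => cos u ^ (2 * n + 1) * sin u ^ (k + 1) * exp (s * cos u ^ 2)
  have hg : ∀ u, HasDerivAt g
      (-(2 * n + 1) * f n u + (2 * n + k + 2 - 2 * s) * f (n + 1) u + 2 * s * f (n + 2) u) u := by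
    intro u
    have hc := (hasDerivAt_cos u).fun_pow (2 * n + 1)
    have hs := (hasDerivAt_sin u).fun_pow (k + 1)
    have he := (((hasDerivAt_cos u).fun_pow 2).const_mul s).exp
    refine ((hc.fun_mul hs).fun_mul he).congr_deriv ?_
    simp only [f, Nat.add_sub_cancel]
    push_cast
    linear_combination (-(2 * n + 1 : ℝ) * cos u ^ (2 * n) * exp (s * cos u ^ 2) * sin u ^ k
      - 2 * s * cos u ^ (2 * n + 2) * exp (s * cos u ^ 2) * sin u ^ k) * sin_sq u
  have hbdry : ∫ u in (0 : ℝ)..π, (-(2 * n + 1) * f n u + (2 * n + k + 2 - 2 * s) * f (n + 1) u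
      + 2 * s * f (n + 2) u) = 0 := by
    rw [integral_eq_sub_of_hasDerivAt (fun u _ => hg u)
      (Continuous.intervalIntegrable (by fun_prop) 0 π)]
    simp [g]
  rw [integral_add (((hf n).const_mul _).add ((hf _).const_mul _)) ((hf _).const_mul _),
    integral_add ((hf n).const_mul _) ((hf _).const_mul _), intervalIntegral.integral_const_mul,
    intervalIntegral.integral_const_mul, intervalIntegral.integral_const_mul] at hbdry
  simp only [cosSqMoment]
  linear_combination -hbdry

lemma mul_cosSqMoment_one_le (k : ℕ) {s c : ℝ} (hs : 0 ≤ s) (hc : c ≤ k + 2) :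
    (c - 2 * s) * cosSqMoment k 1 s ≤ cosSqMoment k 0 s := by
  have h := cosSqMoment_recurrence k 0 s
  have h₁ := cosSqMoment_nonneg k 1 s
  have h₂ := mul_nonneg hs (cosSqMoment_nonneg k 2 s)
  push_cast at h
  nlinarith

lemma antitoneOn_sq_mul_sub_two_mul {F F' : ℝ → ℝ} {a b c : ℝ}
    (hF : ∀ x ∈ Icc a b, HasDerivAt F (F' x) x) (hF_nonneg : ∀ x ∈ Icc a b, 0 ≤ F x)
    (h : ∀ x ∈ Ioo a b, (c - 2 * x) * F' x ≤ F x) :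
    AntitoneOn (fun x => F x ^ 2 * (c - 2 * x)) (Icc a b) := by
  have hderiv : ∀ x ∈ Icc a b, HasDerivAt (fun x => F x ^ 2 * (c - 2 * x))
      (2 * F x * ((c - 2 * x) * F' x - F x)) x := fun x hx =>
    (((hF x hx).fun_pow 2).fun_mul (((hasDerivAt_id x).const_mul 2).const_sub c)).congr_deriv
      (by simp only [id]; ring)
  refine antitoneOn_of_hasDerivWithinAt_nonpos (convex_Icc a b)
    (fun x hx => (hderiv x hx).continuousAt.continuousWithinAt)
    (fun x hx => (hderiv x (interior_subset hx)).hasDerivWithinAt) fun x hx => ?_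
  rw [interior_Icc] at hx
  exact mul_nonpos_of_nonneg_of_nonpos (by linarith [hF_nonneg x (Ioo_subset_Icc_self hx)])
    (by linarith [h x hx])

theorem exp_cos_sq_moment_bound_general (m : ℕ) (F : ℝ → ℝ)
    (hF : ∀ s, F s = (∫ u in (0 : ℝ)..π, Real.exp (s * Real.cos u ^ 2)
        * Real.sin u ^ (m - 1)) / ∫ u in (0 : ℝ)..π, Real.sin u ^ (m - 1)) :
    F 0 = 1 ∧
    (∀ s : ℝ, 0 ≤ s → s < ((m : ℝ) + 1) / 2 →
      deriv F s / F s ≤ 1 / ((m : ℝ) + 1 - 2 * s)) ∧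
    (∀ t : ℝ, 0 < t → t < ((m : ℝ) + 1) / 2 →
      F t ≤ Real.sqrt (((m : ℝ) + 1) / ((m : ℝ) + 1 - 2 * t))) := by
  set M := cosSqMoment (m - 1)
  have hM_pos : ∀ s, 0 < M 0 s := cosSqMoment_zero_pos (m - 1)
  have hF_eq : F = fun s => M 0 s / M 0 0 := funext fun s => by simp [hF, M, cosSqMoment]
  have hF_deriv : ∀ s, HasDerivAt F (M 1 s / M 0 0) s := fun s =>
    hF_eq ▸ (hasDerivAt_cosSqMoment _ 0 s).div_const _
  have hF_pos : ∀ s, 0 < F s := fun s => hF_eq ▸ div_pos (hM_pos s) (hM_pos 0)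
  have hF0 : F 0 = 1 := hF_eq ▸ div_self (hM_pos 0).ne'
  have hkey : ∀ s, 0 ≤ s → ((m : ℝ) + 1 - 2 * s) * (M 1 s / M 0 0) ≤ F s := fun s hs => by
    rw [hF_eq, ← mul_div_assoc]
    exact div_le_div_of_nonneg_right (mul_cosSqMoment_one_le _ hs (by norm_cast; omega))
      (hM_pos 0).le
  refine ⟨hF0, fun s hs hs' => ?_, fun t ht ht' => ?_⟩
  · rw [(hF_deriv s).deriv, div_le_div_iff₀ (hF_pos s) (by linarith), one_mul, mul_comm]
    exact hkey s hs
  · have h := antitoneOn_sq_mul_sub_two_mul (fun x _ => hF_deriv x) (fun x _ => (hF_pos x).le)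
      (fun x hx => hkey x hx.1.le) (left_mem_Icc.2 ht.le) (right_mem_Icc.2 ht.le) ht.le
    simp only [hF0] at h
    rw [le_sqrt (hF_pos t).le (div_nonneg (by positivity) (by linarith)),
      le_div_iff₀ (by linarith)]
    linarith

/-- For `F(s) = (1/vol S^m) ∫_{S^m} exp(s cos²(d_p))`, equivalently
`F(s) = (∫_0^π e^{s cos²u} sin^{m-1}u du)/(∫_0^π sin^{m-1}u du)`: one has `F(0) = 1`,
`F'(s)/F(s) ≤ 1/(m+1-2s)` for `0 ≤ s < (m+1)/2`, and consequently
`F(t) ≤ √((m+1)/(m+1-2t))` for `0 < t < (m+1)/2`. -/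
theorem exp_cos_sq_moment_bound (m : ℕ) (hm : 1 ≤ m) (F : ℝ → ℝ)
    (hF : ∀ s, F s = (∫ u in (0 : ℝ)..π, Real.exp (s * Real.cos u ^ 2)
        * Real.sin u ^ (m - 1)) / ∫ u in (0 : ℝ)..π, Real.sin u ^ (m - 1)) :
    F 0 = 1 ∧
    (∀ s : ℝ, 0 ≤ s → s < ((m : ℝ) + 1) / 2 →
      deriv F s / F s ≤ 1 / ((m : ℝ) + 1 - 2 * s)) ∧
    (∀ t : ℝ, 0 < t → t < ((m : ℝ) + 1) / 2 →
      F t ≤ Real.sqrt (((m : ℝ) + 1) / ((m : ℝ) + 1 - 2 * t))) :=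
  exp_cos_sq_moment_bound_general m F hF
end
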